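/- Let G be a simple graph, x_i x_j an edge of G, A ⊆ N_G(x_i) ∪ N_G(x_j) with x_i, x_j ∉ A, and L := N_{G\A}(x_i) ∩ N_{G\A}(x_j) = {x_1,…,x_t} with t ≥ 1. Define H to be the graph with vertex set V(G \ A) ∪ {y_1,…,y_t} and edge set E(G\A) ∪ {x_p x_q : x_p ∈ N_{G\A}(x_i), x_q ∈ N_{G\A}(x_j), x_p ≠ x_q} ∪ {x_1 y_1,…,x_t y_t}. Then the polarization of the ideal (I(G\A)^2 : x_i x_j) equals the edge ideal I(H). -/

import Mathlib

open MvPolynomial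

/-- The closed neighborhood of a vertex. -/
def closedNbhd {V : Type} (G : SimpleGraph V) (x : V) : Set V :=
  insert x (G.neighborSet x)

/-- A finite set of vertices is a star packing if the closed neighborhoods of its
elements (the vertex sets of the corresponding stars) are pairwise disjoint. -/
def IsStarPacking {V : Type} (G : SimpleGraph V) (s : Finset V) : Prop :=
  (s : Set V).Pairwise fun x y => Disjoint (closedNbhd G x) (closedNbhd G y)

/-- The star packing number `α₂(G)`: the maximum size of a star packing. -/
noncomputable def starPackingNumber {V : Type} (G : SimpleGraph V) : ℕ :=
  sSup {n | ∃ s : Finset V, IsStarPacking G s ∧ s.card = n}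

/-- The whiskered triangle `W(K₃)`: a triangle on vertices `0, 1, 2` with pendant
vertices `3, 4, 5` attached to them respectively. -/
def whiskeredTriangle : SimpleGraph (Fin 6) :=
  SimpleGraph.fromEdgeSet {s(0, 1), s(0, 2), s(1, 2), s(0, 3), s(1, 4), s(2, 5)}

/-- `G` is `W(K₃)`-free: no induced subgraph of `G` is isomorphic to the whiskered
triangle. -/
def WK3Free {V : Type} (G : SimpleGraph V) : Prop :=
  ¬ ∃ f : Fin 6 ↪ V, ∀ a b, whiskeredTriangle.Adj a b ↔ G.Adj (f a) (f b)

/-- The edge ideal of a graph `G`, in the polynomial ring `K[x_v : v ∈ V]`. -/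
noncomputable def edgeIdeal {V : Type} (K : Type) [Field K] (G : SimpleGraph V) :
    Ideal (MvPolynomial V K) :=
  Ideal.span {m | ∃ x y, G.Adj x y ∧ m = X x * X y}

/-- The edge ideal of the induced subgraph `G \ A`, in the polynomial ring
`S_A = K[x_v : v ∉ A]`. -/
noncomputable def edgeIdealOn {V : Type} (K : Type) [Field K] (G : SimpleGraph V)
    (A : Set V) : Ideal (MvPolynomial {v : V // v ∉ A} K) :=
  Ideal.span {m | ∃ x y : {v : V // v ∉ A}, G.Adj x.1 y.1 ∧ m = X x * X y}

/-- The polarization of a monomial ideal `J ⊆ K[x_v : v ∈ W]`, inside the larger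
polynomial ring `K[x_{v,k} : v ∈ W, k ∈ ℕ]` (with `x_v` identified with `x_{v,0}`):
it is generated by the polarizations `∏_v x_{v,0} ⋯ x_{v,d(v)-1}` of the monomials
`∏_v x_v^{d(v)}` belonging to `J`. -/
noncomputable def polarizationIdeal {W : Type} (K : Type) [Field K]
    (J : Ideal (MvPolynomial W K)) : Ideal (MvPolynomial (W × ℕ) K) :=
  Ideal.span {m | ∃ d : W →₀ ℕ, MvPolynomial.monomial d (1 : K) ∈ J ∧
    m = d.prod fun v e => ∏ k ∈ Finset.range e, X (v, k)}

/-- The graph `H`: on the vertices `x_v = (v, 0)` of `G \ A` it consists of the edges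
of `G \ A` together with all pairs `x_p x_q` with `p ∈ N_{G\A}(x_i)`,
`q ∈ N_{G\A}(x_j)`, `p ≠ q`; moreover each vertex `x_v` with
`v ∈ L = N_{G\A}(x_i) ∩ N_{G\A}(x_j)` gets a whisker to the new vertex
`y_v = (v, 1)`. -/
def polGraphH {V : Type} (G : SimpleGraph V) (xi xj : V) (A : Set V) :
    SimpleGraph ({v : V // v ∉ A} × ℕ) :=
  SimpleGraph.fromRel fun a b =>
    (a.2 = 0 ∧ b.2 = 0 ∧
      (G.Adj a.1.1 b.1.1 ∨ (G.Adj xi a.1.1 ∧ G.Adj xj b.1.1 ∧ a.1 ≠ b.1))) ∨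
    (a.1 = b.1 ∧ a.2 = 0 ∧ b.2 = 1 ∧ G.Adj xi a.1.1 ∧ G.Adj xj a.1.1)

/-!
Write `Γ = G \ A`. A monomial `x^d` lies in `(I(Γ)² : x_i x_j)` exactly when `x^d x_i x_j` is
divisible by a product of two edge monomials. If neither edge divides `x^d`, each must use one of
`x_i, x_j`, and they must use different ones; cancelling `x_i x_j` leaves `x_p x_q ∣ x^d` with
`p ∈ N(i)`, `q ∈ N(j)`. So the colon ideal is generated by the edges of `Γ` together with the
`x_p x_q`, `p ∈ N(i)`, `q ∈ N(j)`, and these polarize to `x_p x_q` for `p ≠ q` and to the whisker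
`x_p y_p` for `p = q ∈ L`: exactly the edges of `H`.
-/

open Finsupp

namespace Finsupp

variable {W : Type*}

lemma le_or_le_of_add_le_add_single_add_single {u w d : W →₀ ℕ} {i j : W} (hij : i ≠ j)
    (h : u + w ≤ d + (single i 1 + single j 1)) :
    u ≤ d ∨ w ≤ d ∨ (u i ≠ 0 ∧ w j ≠ 0) ∨ (w i ≠ 0 ∧ u j ≠ 0) := by
  classical
  by_contra! hne
  obtain ⟨hu, hw, hi, hj⟩ := hne
  obtain ⟨v, hv⟩ : ∃ v, d v < u v := by simpa [Finsupp.le_def] using hu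
  obtain ⟨v', hv'⟩ : ∃ v, d v < w v := by simpa [Finsupp.le_def] using hw
  -- `v` and `v'` can only be `i` or `j`, and they cannot coincide
  have hle := Finsupp.le_def.1 h
  have := hle v
  have := hle v'
  have := hle i
  have := hle j
  simp only [Finsupp.coe_add, Pi.add_apply, single_apply] at *
  split_ifs at * <;> subst_vars <;> omega

end Finsupp

namespace SimpleGraph

variable {W : Type*} {Γ : SimpleGraph W}

lemma Adj.exists_adj_eq_of_apply_ne_zero {a b v : W} (hab : Γ.Adj a b)
    (hv : (single a 1 + single b 1 : W →₀ ℕ) v ≠ 0) :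
    ∃ c, Γ.Adj v c ∧ single a 1 + single b 1 = single v 1 + single c 1 := by
  classical
  simp only [Finsupp.coe_add, Pi.add_apply, single_apply] at hv
  by_cases hva : a = v
  · exact ⟨b, hva ▸ hab, by rw [hva]⟩
  · obtain rfl : b = v := by by_contra hvb; simp [hva, hvb] at hv
    exact ⟨a, hab.symm, add_comm _ _⟩

lemma exists_adj_of_two_edges_le {i j a b c e : W} {d : W →₀ ℕ} (hij : i ≠ j)
    (hab : Γ.Adj a b) (hce : Γ.Adj c e)
    (hle : single a 1 + single b 1 + (single c 1 + single e 1) ≤ d + (single i 1 + single j 1)) :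
    ∃ p q, (Γ.Adj p q ∨ Γ.Adj i p ∧ Γ.Adj j q) ∧ single p 1 + single q 1 ≤ d := by
  have cross : ∀ {a b c e : W}, Γ.Adj a b → Γ.Adj c e →
      single a 1 + single b 1 + (single c 1 + single e 1) ≤ d + (single i 1 + single j 1) →
      (single a 1 + single b 1 : W →₀ ℕ) i ≠ 0 → (single c 1 + single e 1 : W →₀ ℕ) j ≠ 0 →
      ∃ p q, (Γ.Adj p q ∨ Γ.Adj i p ∧ Γ.Adj j q) ∧ single p 1 + single q 1 ≤ d := by
    intro a b c e hab hce hle hi hj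
    obtain ⟨p, hip, hp⟩ := hab.exists_adj_eq_of_apply_ne_zero hi
    obtain ⟨q, hjq, hq⟩ := hce.exists_adj_eq_of_apply_ne_zero hj
    refine ⟨p, q, Or.inr ⟨hip, hjq⟩, ?_⟩
    rw [hp, hq, add_add_add_comm, add_comm d] at hle
    exact le_of_add_le_add_left hle
  rcases le_or_le_of_add_le_add_single_add_single hij hle with h | h | ⟨hi, hj⟩ | ⟨hi, hj⟩
  · exact ⟨a, b, Or.inl hab, h⟩
  · exact ⟨c, e, Or.inl hce, h⟩
  · exact cross hab hce hle hi hj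
  · exact cross hce hab (by rwa [add_comm (single c 1 + _)]) hi hj

end SimpleGraph

namespace MvPolynomial

open scoped Pointwise

variable {W R : Type*} [CommSemiring R]

lemma X_mul_X_eq_monomial (a b : W) :
    (X a * X b : MvPolynomial W R) = monomial (single a 1 + single b 1) 1 := by
  rw [X, X, monomial_mul, one_mul]

lemma span_monomial_image_mul (S T : Set (W →₀ ℕ)) :
    Ideal.span ((fun s => monomial s (1 : R)) '' S) * Ideal.span ((fun s => monomial s 1) '' T) =
      Ideal.span ((fun s => monomial s 1) '' (S + T)) := by
  rw [Ideal.span_mul_span']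
  congr 1
  ext m
  simp [Set.mem_mul, Set.mem_add, monomial_mul]

lemma monomial_mem_span_monomial_image_iff [Nontrivial R] {S : Set (W →₀ ℕ)} {d : W →₀ ℕ} :
    monomial d (1 : R) ∈ Ideal.span ((fun s => monomial s 1) '' S) ↔ ∃ s ∈ S, s ≤ d := by
  classical
  simp [mem_ideal_span_monomial_image, support_monomial]

lemma monomial_mem_colon_span_monomial_iff {J : Ideal (MvPolynomial W R)} {d e : W →₀ ℕ} :
    monomial d 1 ∈ J.colon ((Ideal.span {monomial e 1} : Ideal (MvPolynomial W R)) : Set _) ↔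
      monomial (d + e) 1 ∈ J := by
  rw [Ideal.mem_colon_span_singleton, monomial_mul, one_mul]

end MvPolynomial

section EdgeIdeal

open scoped Pointwise

variable {W : Type} {K : Type} [Field K] {Γ : SimpleGraph W}

lemma edgeIdeal_eq_span_monomial :
    edgeIdeal K Γ = Ideal.span ((fun s => monomial s (1 : K)) ''
      {s | ∃ a b, Γ.Adj a b ∧ s = single a 1 + single b 1}) := by
  rw [edgeIdeal]
  congr 1
  ext m
  simp [X_mul_X_eq_monomial, eq_comm]

lemma monomial_mem_edgeIdeal_sq_iff {d : W →₀ ℕ} :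
    monomial d (1 : K) ∈ edgeIdeal K Γ ^ 2 ↔ ∃ a b c e, Γ.Adj a b ∧ Γ.Adj c e ∧
      single a 1 + single b 1 + (single c 1 + single e 1) ≤ d := by
  rw [edgeIdeal_eq_span_monomial, sq, span_monomial_image_mul,
    monomial_mem_span_monomial_image_iff]
  simp [Set.mem_add, and_assoc]

lemma monomial_mem_colon_edgeIdeal_sq_iff {i j : W} (hij : Γ.Adj i j) {d : W →₀ ℕ} :
    monomial d (1 : K) ∈ (edgeIdeal K Γ ^ 2).colon
        ((Ideal.span {X i * X j} : Ideal (MvPolynomial W K)) : Set (MvPolynomial W K)) ↔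
      ∃ p q, (Γ.Adj p q ∨ Γ.Adj i p ∧ Γ.Adj j q) ∧ single p 1 + single q 1 ≤ d := by
  rw [X_mul_X_eq_monomial, monomial_mem_colon_span_monomial_iff, monomial_mem_edgeIdeal_sq_iff]
  constructor
  · rintro ⟨a, b, c, e, hab, hce, hle⟩
    exact SimpleGraph.exists_adj_of_two_edges_le hij.ne hab hce hle
  · rintro ⟨p, q, hpq | ⟨hip, hjq⟩, hle⟩
    · exact ⟨i, j, p, q, hij, hpq, (add_comm _ _).trans_le (add_le_add_left hle _)⟩
    · refine ⟨i, p, j, q, hip, hjq, ?_⟩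
      rw [add_add_add_comm, add_comm]
      exact add_le_add_left hle _

lemma edgeIdealOn_eq_edgeIdeal_comap {V : Type} (G : SimpleGraph V) (A : Set V) :
    edgeIdealOn K G A = edgeIdeal K (G.comap Subtype.val) :=
  rfl

end EdgeIdeal

section Polarization

variable {W : Type*} (R : Type*) [CommSemiring R]

noncomputable def polarize (d : W →₀ ℕ) : MvPolynomial (W × ℕ) R :=
  d.prod fun v e => ∏ k ∈ Finset.range e, X (v, k)

variable {R}

lemma polarize_dvd_polarize {d d' : W →₀ ℕ} (h : d ≤ d') : polarize R d ∣ polarize R d' :=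
  prod_dvd_prod_of_subset_of_dvd (support_mono h) fun v _ =>
    Finset.prod_dvd_prod_of_subset _ _ _ (Finset.range_subset_range.mpr (h v))

lemma polarize_single_add_single_of_ne {a b : W} (hab : a ≠ b) :
    polarize R (single a 1 + single b 1) = X (a, 0) * X (b, 0) := by
  classical
  rw [polarize, prod_add_index_of_disjoint (by simpa using hab),
    prod_single_index (by simp), prod_single_index (by simp)]
  simp

lemma polarize_single_add_single_self (a : W) :
    polarize R (single a 1 + single a 1) = X (a, 0) * X (a, 1) := by
  rw [polarize, ← single_add, prod_single_index (by simp), Finset.prod_range_succ,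
    Finset.prod_range_one]

lemma polarize_mem_polarizationIdeal {W K : Type} [Field K] {J : Ideal (MvPolynomial W K)}
    {d : W →₀ ℕ} (hd : monomial d 1 ∈ J) : polarize K d ∈ polarizationIdeal K J :=
  Ideal.subset_span ⟨d, hd, rfl⟩

lemma polarizationIdeal_le_iff {W K : Type} [Field K] {J : Ideal (MvPolynomial W K)}
    {I : Ideal (MvPolynomial (W × ℕ) K)} :
    polarizationIdeal K J ≤ I ↔ ∀ d, monomial d 1 ∈ J → polarize K d ∈ I := by
  rw [polarizationIdeal, Ideal.span_le]
  exact ⟨fun h d hd => h ⟨d, hd, rfl⟩, by rintro h _ ⟨d, hd, rfl⟩; exact h d hd⟩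

end Polarization

section GraphH

variable {V : Type} {K : Type} [Field K] {G : SimpleGraph V} {xi xj : V} {A : Set V}

lemma polarize_mem_edgeIdeal_polGraphH {p q : {v : V // v ∉ A}}
    (h : G.Adj p q ∨ G.Adj xi p ∧ G.Adj xj q) :
    polarize K (single p 1 + single q 1) ∈ edgeIdeal K (polGraphH G xi xj A) := by
  by_cases hpq : p = q
  · subst hpq
    have hL : G.Adj xi p ∧ G.Adj xj p := h.resolve_left G.irrefl
    rw [polarize_single_add_single_self]
    refine Ideal.subset_span ⟨(p, 0), (p, 1), ?_, rfl⟩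
    rw [polGraphH, SimpleGraph.fromRel_adj]
    exact ⟨by simp, Or.inl (Or.inr ⟨rfl, rfl, rfl, hL⟩)⟩
  · rw [polarize_single_add_single_of_ne hpq]
    refine Ideal.subset_span ⟨(p, 0), (q, 0), ?_, rfl⟩
    rw [polGraphH, SimpleGraph.fromRel_adj]
    exact ⟨by simpa using hpq, Or.inl (Or.inl ⟨rfl, rfl, h.imp_right fun h => ⟨h.1, h.2, hpq⟩⟩)⟩

lemma exists_polarize_eq_of_polGraphH_adj {x y : {v : V // v ∉ A} × ℕ}
    (h : (polGraphH G xi xj A).Adj x y) :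
    ∃ p q : {v : V // v ∉ A}, (G.Adj p q ∨ G.Adj xi p ∧ G.Adj xj q) ∧
      polarize K (single p 1 + single q 1) = X x * X y := by
  obtain ⟨p, m⟩ := x
  obtain ⟨q, n⟩ := y
  rw [polGraphH, SimpleGraph.fromRel_adj] at h
  obtain ⟨hne, (⟨rfl, rfl, hpq⟩ | ⟨rfl, rfl, rfl, hL⟩) | (⟨rfl, rfl, hqp⟩ | ⟨rfl, rfl, rfl, hL⟩)⟩ :=
    h
  · have : p ≠ q := fun h => hne (h ▸ rfl)
    exact ⟨p, q, hpq.imp_right fun h => ⟨h.1, h.2.1⟩, polarize_single_add_single_of_ne this⟩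
  · exact ⟨p, p, Or.inr hL, polarize_single_add_single_self p⟩
  · have : q ≠ p := fun h => hne (h ▸ rfl)
    exact ⟨q, p, hqp.imp_right fun h => ⟨h.1, h.2.1⟩,
      by rw [polarize_single_add_single_of_ne this, mul_comm]⟩
  · exact ⟨q, q, Or.inr hL, by rw [polarize_single_add_single_self, mul_comm]⟩

end GraphH

theorem polarization_colon_square_eq_edgeIdeal_general {V : Type} (K : Type) [Field K]
    (G : SimpleGraph V) (xi xj : V) (hij : G.Adj xi xj) (A : Set V)
    (hiA : xi ∉ A) (hjA : xj ∉ A) :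
    polarizationIdeal K ((edgeIdealOn K G A ^ 2).colon
        ((Ideal.span {X ⟨xi, hiA⟩ * X ⟨xj, hjA⟩} : Ideal (MvPolynomial {v : V // v ∉ A} K)) :
          Set (MvPolynomial {v : V // v ∉ A} K))) =
      edgeIdeal K (polGraphH G xi xj A) := by
  have hij' : (G.comap Subtype.val).Adj (⟨xi, hiA⟩ : {v // v ∉ A}) ⟨xj, hjA⟩ := hij
  rw [edgeIdealOn_eq_edgeIdeal_comap]
  apply le_antisymm
  · refine polarizationIdeal_le_iff.2 fun d hd => ?_
    obtain ⟨p, q, hpq, hle⟩ := (monomial_mem_colon_edgeIdeal_sq_iff hij').1 hd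
    exact Ideal.mem_of_dvd _ (polarize_dvd_polarize hle) (polarize_mem_edgeIdeal_polGraphH hpq)
  · rw [edgeIdeal, Ideal.span_le]
    rintro _ ⟨x, y, hxy, rfl⟩
    obtain ⟨p, q, hpq, hxy⟩ := exists_polarize_eq_of_polGraphH_adj (K := K) hxy
    rw [← hxy]
    exact polarize_mem_polarizationIdeal
      ((monomial_mem_colon_edgeIdeal_sq_iff hij').2 ⟨p, q, hpq, le_rfl⟩)

/-- Let `x_i x_j` be an edge of `G`, `A ⊆ N_G(x_i) ∪ N_G(x_j)` with `x_i, x_j ∉ A`,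
and suppose `L = N_{G\A}(x_i) ∩ N_{G\A}(x_j)` is nonempty.  Then the polarization of
the ideal `(I(G\A)² : x_i x_j)` equals the edge ideal of the graph `H`. -/
theorem polarization_colon_square_eq_edgeIdeal {V : Type} (K : Type) [Field K]
    (G : SimpleGraph V) (xi xj : V) (hij : G.Adj xi xj) (A : Set V)
    (hA : A ⊆ G.neighborSet xi ∪ G.neighborSet xj) (hiA : xi ∉ A) (hjA : xj ∉ A)
    (hL : ∃ v : {v : V // v ∉ A}, G.Adj xi v.1 ∧ G.Adj xj v.1) :
    polarizationIdeal K ((edgeIdealOn K G A ^ 2).colon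
        ((Ideal.span {X ⟨xi, hiA⟩ * X ⟨xj, hjA⟩} : Ideal (MvPolynomial {v : V // v ∉ A} K)) :
          Set (MvPolynomial {v : V // v ∉ A} K))) =
      edgeIdeal K (polGraphH G xi xj A) :=
  polarization_colon_square_eq_edgeIdeal_general K G xi xj hij A hiA hjA
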